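/- Let H be a complex separable infinite-dimensional Hilbert space, let T be a bounded linear operator on H, and let λ ∈ Int W_e(T). Then for every closed subspace M ⊆ H of finite codimension there exists a unit vector x ∈ M such that ⟨T x, x⟩ = λ. -/

import Mathlib

open scoped InnerProductSpace

/-- The essential numerical range of a bounded operator `T`: the set of `z ∈ ℂ` such that
`⟨T eₙ, eₙ⟩ → z` for some orthonormal sequence `(eₙ)`. Here `⟨x, y⟩` (paper convention,
linear in the first variable) is Mathlib's `⟪y, x⟫_ℂ`. -/
def essNumRange {H : Type*} [NormedAddCommGroup H] [InnerProductSpace ℂ H]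
    (T : H →L[ℂ] H) : Set ℂ :=
  {z | ∃ e : ℕ → H, Orthonormal ℂ e ∧
    Filter.Tendsto (fun n => ⟪e n, T (e n)⟫_ℂ) Filter.atTop (nhds z)}

/-- An orthonormal basis of `H`, viewed as an orthonormal sequence whose closed linear
span is all of `H`. -/
def IsONBasis {H : Type*} [NormedAddCommGroup H] [InnerProductSpace ℂ H] (u : ℕ → H) : Prop :=
  Orthonormal ℂ u ∧ (Submodule.span ℂ (Set.range u)).topologicalClosure = ⊤

/-! The numerical range of `T` compressed to `M` is convex (Toeplitz–Hausdorff): after an affine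
change of `T` making `⟪x, T x⟫ = 1` and `⟪y, T y⟫ = 0`, and a rephasing of `y`, the quadratic form
is real on the real span of `x` and `y`, so the intermediate value theorem fills in `[0, 1]`.
Every point of `W_e(T)` is a limit of values of this numerical range: the component of an
orthonormal sequence in the finite-dimensional space `Mᗮ` tends to zero, so projecting the
sequence onto `M` does not change the limiting values. Finally, a convex subset of `ℂ` contains
the interior of its closure. -/

open scoped ComplexConjugate
open Filter Topology

theorem Convex.interior_closure_subset {V : Type*} [NormedAddCommGroup V] [NormedSpace ℝ V]
    [FiniteDimensional ℝ V] {s : Set V} (hs : Convex ℝ s) : interior (closure s) ⊆ s := by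
  intro z hz
  have hspan : affineSpan ℝ s = ⊤ := by
    refine eq_top_iff.mpr ?_
    calc ⊤ = affineSpan ℝ (closure s) :=
          (hs.closure.interior_nonempty_iff_affineSpan_eq_top.mp ⟨z, hz⟩).symm
      _ ≤ affineSpan ℝ s := affineSpan_le.mpr <|
          closure_minimal (subset_affineSpan ℝ s) (affineSpan ℝ s).closed_of_finiteDimensional
  rw [hs.interior_closure_eq_interior_of_nonempty_interior
    (hs.interior_nonempty_iff_affineSpan_eq_top.mpr hspan)] at hz
  exact interior_subset hz

theorem Orthonormal.tendsto_inner_cofinite_zero {𝕜 E ι : Type*} [RCLike 𝕜] [NormedAddCommGroup E]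
    [InnerProductSpace 𝕜 E] {e : ι → E} (he : Orthonormal 𝕜 e) (v : E) :
    Tendsto (fun i => ⟪v, e i⟫_𝕜) cofinite (𝓝 0) := by
  have h := (he.inner_products_summable (x := v)).tendsto_cofinite_zero
  rw [tendsto_zero_iff_norm_tendsto_zero]
  simpa [Function.comp_def, norm_inner_symm] using (Real.continuous_sqrt.tendsto 0).comp h

theorem Orthonormal.tendsto_starProjection_cofinite_zero {𝕜 E ι : Type*} [RCLike 𝕜]
    [NormedAddCommGroup E] [InnerProductSpace 𝕜 E] {e : ι → E} (he : Orthonormal 𝕜 e)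
    (K : Submodule 𝕜 E) [FiniteDimensional 𝕜 K] :
    Tendsto (fun i => K.starProjection (e i)) cofinite (𝓝 0) := by
  let b := stdOrthonormalBasis 𝕜 K
  have hsum : ∀ v, K.starProjection v = ∑ j, ⟪(b j : E), v⟫_𝕜 • (b j : E) := fun v => by
    simp [Submodule.starProjection_apply, b.orthogonalProjectionOnto_apply_eq_sum]
  simp only [hsum]
  simpa using tendsto_finsetSum Finset.univ fun j _ =>
    (he.tendsto_inner_cofinite_zero (b j : E)).smul_const (b j : E)

theorem norm_inner_map_self_sub_le {𝕜 E : Type*} [RCLike 𝕜] [NormedAddCommGroup E]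
    [InnerProductSpace 𝕜 E] (T : E →L[𝕜] E) (x y : E) :
    ‖⟪x, T x⟫_𝕜 - ⟪y, T y⟫_𝕜‖ ≤ ‖T‖ * (‖x‖ + ‖y‖) * ‖x - y‖ := by
  have hsplit : ⟪x, T x⟫_𝕜 - ⟪y, T y⟫_𝕜 = ⟪x - y, T x⟫_𝕜 + ⟪y, T (x - y)⟫_𝕜 := by
    simp only [inner_sub_left, map_sub, inner_sub_right]; ring
  calc ‖⟪x, T x⟫_𝕜 - ⟪y, T y⟫_𝕜‖
      ≤ ‖x - y‖ * ‖T x‖ + ‖y‖ * ‖T (x - y)‖ := by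
        rw [hsplit]
        exact (norm_add_le _ _).trans
          (add_le_add (norm_inner_le_norm _ _) (norm_inner_le_norm _ _))
    _ ≤ ‖x - y‖ * (‖T‖ * ‖x‖) + ‖y‖ * (‖T‖ * ‖x - y‖) := by
        gcongr <;> exact T.le_opNorm _
    _ = ‖T‖ * (‖x‖ + ‖y‖) * ‖x - y‖ := by ring

section NumericalRange

variable {H : Type*} [NormedAddCommGroup H] [InnerProductSpace ℂ H]

def numRangeOn (T : H →L[ℂ] H) (M : Submodule ℂ H) : Set ℂ :=
  {w | ∃ x, x ∈ M ∧ ‖x‖ = 1 ∧ ⟪x, T x⟫_ℂ = w}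

variable (T : H →L[ℂ] H) {M : Submodule ℂ H}

theorem inner_map_self_div_mem_numRangeOn {x : H} (hxM : x ∈ M) (hx : x ≠ 0) :
    ⟪x, T x⟫_ℂ / (‖x‖ : ℂ) ^ 2 ∈ numRangeOn T M := by
  refine ⟨((‖x‖⁻¹ : ℝ) : ℂ) • x, M.smul_mem _ hxM, ?_, ?_⟩
  · rw [norm_smul, Complex.norm_real, norm_inv, norm_norm,
      inv_mul_cancel₀ (norm_ne_zero_iff.mpr hx)]
  · rw [map_smul, inner_smul_left, inner_smul_right, Complex.conj_ofReal]
    push_cast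
    field_simp

theorem linearIndependent_pair_of_inner_map_self_ne {x y : H} (hx : ‖x‖ = 1) (hy : ‖y‖ = 1)
    (hxy : ⟪x, T x⟫_ℂ ≠ ⟪y, T y⟫_ℂ) : LinearIndependent ℂ ![x, y] := by
  refine (LinearIndependent.pair_iff' (norm_ne_zero_iff.mp (hx ▸ one_ne_zero))).mpr ?_
  rintro a rfl
  have ha : ‖a‖ = 1 := by simpa [norm_smul, hx] using hy
  apply hxy
  rw [map_smul, inner_smul_left, inner_smul_right, ← mul_assoc, Complex.conj_mul', ha]
  simp

theorem ofReal_mem_numRangeOn {x y : H} (hxM : x ∈ M) (hyM : y ∈ M) (hx : ‖x‖ = 1)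
    (hy : ‖y‖ = 1) (hx1 : ⟪x, T x⟫_ℂ = 1) (hy0 : ⟪y, T y⟫_ℂ = 0) {t : ℝ} (ht : t ∈ Set.Icc 0 1) :
    (t : ℂ) ∈ numRangeOn T M := by
  set c := ⟪x, T y⟫_ℂ - ⟪T x, y⟫_ℂ
  set μ := Complex.exp (((-c.arg : ℝ) : ℂ) * Complex.I)
  have hμ : ‖μ‖ = 1 := Complex.norm_exp_ofReal_mul_I _
  have hμc : μ * c = ‖c‖ := by
    conv_lhs => rw [← Complex.norm_mul_exp_arg_mul_I c]
    rw [mul_left_comm, ← Complex.exp_add]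
    simp
  -- the phase `μ` makes the quadratic form real on the real span of `x` and `μ • y`
  set r := μ * ⟪x, T y⟫_ℂ + conj μ * ⟪y, T x⟫_ℂ
  have hr : (r.re : ℂ) = r := by
    have : r = μ * c + (μ * ⟪T x, y⟫_ℂ + conj (μ * ⟪T x, y⟫_ℂ)) := by
      rw [map_mul, inner_conj_symm]; ring
    rw [this, hμc, Complex.add_conj]
    simp
  set w : ℝ → H := fun s => ((1 - s : ℝ) : ℂ) • x + ((s : ℝ) * μ : ℂ) • y
  have hq : ∀ s, ⟪w s, T (w s)⟫_ℂ = (((1 - s) ^ 2 + s * (1 - s) * r.re : ℝ) : ℂ) := by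
    intro s
    simp only [w, map_add, map_smul, inner_add_left, inner_add_right, inner_smul_left,
      inner_smul_right, hx1, hy0, map_mul, Complex.conj_ofReal]
    push_cast
    rw [hr]
    ring
  have hw : ∀ s, w s ≠ 0 := by
    intro s hs
    obtain ⟨h1, h2⟩ := LinearIndependent.pair_iff.mp
      (linearIndependent_pair_of_inner_map_self_ne T hx hy (by simp [hx1, hy0])) _ _ hs
    have : μ ≠ 0 := norm_ne_zero_iff.mp (hμ ▸ one_ne_zero)
    simp_all [sub_eq_zero]
  have hw0 : ‖w 0‖ = 1 := by simp [w, hx]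
  have hw1 : ‖w 1‖ = 1 := by simp [w, norm_smul, hμ, hy]
  set g : ℝ → ℝ := fun s => (1 - s) ^ 2 + s * (1 - s) * r.re - t * ‖w s‖ ^ 2
  have hg : ContinuousOn g (Set.Icc 0 1) := by fun_prop
  obtain ⟨s, hs, hgs⟩ := intermediate_value_Icc' zero_le_one hg
    (show (0 : ℝ) ∈ Set.Icc (g 1) (g 0) by
      simp only [g, hw0, hw1]; constructor <;> linarith [ht.1, ht.2])
  have hws : ⟪w s, T (w s)⟫_ℂ = t * (‖w s‖ : ℂ) ^ 2 := by
    rw [hq]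
    exact_mod_cast (sub_eq_zero.mp hgs)
  have hnorm : (‖w s‖ : ℂ) ≠ 0 := by exact_mod_cast norm_ne_zero_iff.mpr (hw s)
  have hwM : w s ∈ M := M.add_mem (M.smul_mem _ hxM) (M.smul_mem _ hyM)
  simpa only [hws, mul_div_cancel_right₀ _ (pow_ne_zero 2 hnorm)] using
    inner_map_self_div_mem_numRangeOn T hwM (hw s)

theorem convex_numRangeOn : Convex ℝ (numRangeOn T M) := by
  rintro _ ⟨x, hxM, hx, rfl⟩ _ ⟨y, hyM, hy, rfl⟩ a b ha hb hab
  by_cases hxy : ⟪x, T x⟫_ℂ = ⟪y, T y⟫_ℂ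
  · exact ⟨x, hxM, hx, by rw [← hxy, ← add_smul, hab, one_smul]⟩
  have hxy' : ⟪x, T x⟫_ℂ - ⟪y, T y⟫_ℂ ≠ 0 := sub_ne_zero.mpr hxy
  set S := (⟪x, T x⟫_ℂ - ⟪y, T y⟫_ℂ)⁻¹ • (T - ⟪y, T y⟫_ℂ • 1)
  have hS : ∀ z : H, ‖z‖ = 1 →
      ⟪z, S z⟫_ℂ = (⟪x, T x⟫_ℂ - ⟪y, T y⟫_ℂ)⁻¹ * (⟪z, T z⟫_ℂ - ⟪y, T y⟫_ℂ) := by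
    intro z hz
    simp [S, hz]
  obtain ⟨z, hzM, hz, hzS⟩ := ofReal_mem_numRangeOn S hxM hyM hx hy
    (by rw [hS x hx]; exact inv_mul_cancel₀ hxy') (by rw [hS y hy]; simp) ⟨ha, by linarith⟩
  refine ⟨z, hzM, hz, ?_⟩
  rw [hS z hz, inv_mul_eq_iff_eq_mul₀ hxy'] at hzS
  obtain rfl : b = 1 - a := by linarith
  rw [Complex.real_smul, Complex.real_smul]
  push_cast
  linear_combination hzS

theorem mem_closure_numRangeOn_of_tendsto {ι : Type*} {l : Filter ι} [l.NeBot] {u : ι → H}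
    {z : ℂ} (huM : ∀ i, u i ∈ M) (hu : Tendsto (fun i => ‖u i‖) l (𝓝 1))
    (hz : Tendsto (fun i => ⟪u i, T (u i)⟫_ℂ) l (𝓝 z)) : z ∈ closure (numRangeOn T M) := by
  have hu' : Tendsto (fun i => (‖u i‖ : ℂ) ^ 2) l (𝓝 1) := by
    simpa using ((Complex.continuous_ofReal.tendsto 1).comp hu).pow 2
  refine mem_closure_of_tendsto (by simpa using hz.div hu' one_ne_zero) ?_
  filter_upwards [hu.eventually (eventually_ne_nhds one_ne_zero)] with i hi
  exact inner_map_self_div_mem_numRangeOn T (huM i) (norm_ne_zero_iff.mp hi)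

theorem essNumRange_subset_closure_numRangeOn [CompleteSpace H] (hMc : IsClosed (M : Set H))
    [FiniteDimensional ℂ Mᗮ] : essNumRange T ⊆ closure (numRangeOn T M) := by
  rintro z ⟨e, he, hz⟩
  have : CompleteSpace M := hMc.completeSpace_coe
  set u := fun n => e n - Mᗮ.starProjection (e n)
  have huM : ∀ n, u n ∈ M := fun n => by
    simpa only [Submodule.orthogonal_orthogonal] using
      Submodule.sub_starProjection_mem_orthogonal (K := Mᗮ) (e n)
  have hdist : Tendsto (fun n => ‖u n - e n‖) atTop (𝓝 0) := by
    have h := (he.tendsto_starProjection_cofinite_zero Mᗮ).norm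
    rw [Nat.cofinite_eq_atTop, norm_zero] at h
    simpa only [u, sub_sub_cancel_left, norm_neg] using h
  have hnorm : Tendsto (fun n => ‖u n‖) atTop (𝓝 1) := by
    refine tendsto_iff_norm_sub_tendsto_zero.mpr
      (squeeze_zero (fun _ => norm_nonneg _) (fun n => ?_) hdist)
    simpa [he.1 n] using abs_norm_sub_norm_le (u n) (e n)
  have hquad : Tendsto (fun n => ⟪u n, T (u n)⟫_ℂ - ⟪e n, T (e n)⟫_ℂ) atTop (𝓝 0) := by
    refine tendsto_zero_iff_norm_tendsto_zero.mpr (squeeze_zero (fun _ => norm_nonneg _)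
      (fun n => norm_inner_map_self_sub_le T (u n) (e n)) ?_)
    simpa [he.1] using ((hnorm.add_const 1).const_mul ‖T‖).mul hdist
  exact mem_closure_numRangeOn_of_tendsto T huM hnorm (by simpa using hquad.add hz)

end NumericalRange

theorem stmt19_general {H : Type*} [NormedAddCommGroup H] [InnerProductSpace ℂ H] [CompleteSpace H]
    (T : H →L[ℂ] H) (lam : ℂ) (hlam : lam ∈ interior (essNumRange T))
    (M : Submodule ℂ H) (hMc : IsClosed (M : Set H)) (hMf : FiniteDimensional ℂ ↥Mᗮ) :
    ∃ x : H, x ∈ M ∧ ‖x‖ = 1 ∧ ⟪x, T x⟫_ℂ = lam :=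
  (convex_numRangeOn T).interior_closure_subset
    (interior_mono (essNumRange_subset_closure_numRangeOn T hMc) hlam)

theorem stmt19 {H : Type*} [NormedAddCommGroup H] [InnerProductSpace ℂ H] [CompleteSpace H]
    [TopologicalSpace.SeparableSpace H] (hinf : ¬ FiniteDimensional ℂ H)
    (T : H →L[ℂ] H) (lam : ℂ) (hlam : lam ∈ interior (essNumRange T))
    (M : Submodule ℂ H) (hMc : IsClosed (M : Set H)) (hMf : FiniteDimensional ℂ ↥Mᗮ) :
    ∃ x : H, x ∈ M ∧ ‖x‖ = 1 ∧ ⟪x, T x⟫_ℂ = lam :=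
  stmt19_general T lam hlam M hMc hMf
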